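/- For every k with 0 < k ≤ 2, the integral of (x − y)^{−2} over the region Ω_k equals k: ∬_{Ω_k} (x − y)^{−2} dy dx = k (the key computation in Proposition: the measure of the thickened section for excursions). -/

import Mathlib

/-!
The shear `(x, y) ↦ (x, y - x)` preserves Lebesgue measure on `ℝ²` and turns the integrand into
`z⁻²`. Since `c = 2/k ≥ 1`, the sign conditions on `y` in `J` are implied by `|x - y| > c`, so the
shear maps `Ω_k` onto `(-1,0) × (c,∞) ∪ (0,1) × (-∞,-c)`. Each of these two products contributes
`∫_c^∞ z⁻² dz = c⁻¹ = k/2`.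
-/

open MeasureTheory

/-- The region `J = ((−1,0) × (0,∞)) ∪ ((0,1) × (−∞,0)) ⊂ ℝ²`. -/
def regionJ : Set (ℝ × ℝ) :=
  (Set.Ioo (-1 : ℝ) 0 ×ˢ Set.Ioi (0 : ℝ)) ∪ (Set.Ioo (0 : ℝ) 1 ×ˢ Set.Iio (0 : ℝ))

/-- The region `Ω_k = {(x,y) ∈ J : |x − y| > 2/k}`. -/
def omegaRegion (k : ℝ) : Set (ℝ × ℝ) := {p ∈ regionJ | 2 / k < |p.1 - p.2|}

open Set

section Prod

variable {α β E : Type*} [MeasurableSpace α] [MeasurableSpace β] [NormedAddCommGroup E]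
  {μ : Measure α} {ν : Measure β} [SFinite μ] [SFinite ν]

theorem setIntegral_prod_fun_snd [NormedSpace ℝ E] (s : Set α) (t : Set β) (g : β → E) :
    ∫ z in s ×ˢ t, g z.2 ∂μ.prod ν = μ.real s • ∫ y in t, g y ∂ν := by
  rw [← Measure.prod_restrict, integral_fun_snd, measureReal_restrict_apply_univ]

theorem MeasureTheory.IntegrableOn.comp_snd_prod {s : Set α} {t : Set β} {g : β → E}
    (hs : μ s ≠ ⊤) (hg : IntegrableOn g t ν) :
    IntegrableOn (fun z : α × β => g z.2) (s ×ˢ t) (μ.prod ν) := by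
  have : IsFiniteMeasure (μ.restrict s) := isFiniteMeasure_restrict.2 hs
  rw [IntegrableOn, ← Measure.prod_restrict]
  exact hg.comp_snd _

end Prod

section Even

variable {E : Type*} [NormedAddCommGroup E] {g : ℝ → E}

theorem integrableOn_Iio_neg_iff_of_even (hg : ∀ x, g (-x) = g x) (c : ℝ) :
    IntegrableOn g (Iio (-c)) ↔ IntegrableOn g (Ioi c) := by
  rw [← (Measure.measurePreserving_neg volume).integrableOn_comp_preimage
    (Homeomorph.neg ℝ).measurableEmbedding, neg_preimage, neg_Iio, neg_neg]
  exact integrableOn_congr_fun (fun x _ => hg x) measurableSet_Ioi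

theorem integral_Iio_neg_of_even [NormedSpace ℝ E] (hg : ∀ x, g (-x) = g x) (c : ℝ) :
    ∫ x in Iio (-c), g x = ∫ x in Ioi c, g x := by
  simp only [← integral_Iic_eq_integral_Iio, ← integral_comp_neg_Ioi, hg]

end Even

theorem inv_sq_eq_rpow (x : ℝ) : (x ^ 2)⁻¹ = x ^ (-2 : ℝ) := by
  rw [show (-2 : ℝ) = ((-2 : ℤ) : ℝ) by norm_num, Real.rpow_intCast, zpow_neg, zpow_ofNat]

theorem integrableOn_Ioi_inv_sq {c : ℝ} (hc : 0 < c) :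
    IntegrableOn (fun x : ℝ => (x ^ 2)⁻¹) (Ioi c) := by
  simpa only [inv_sq_eq_rpow] using integrableOn_Ioi_rpow_of_lt (by norm_num) hc

theorem integral_Ioi_inv_sq {c : ℝ} (hc : 0 < c) : ∫ x in Ioi c, (x ^ 2)⁻¹ = c⁻¹ := by
  simp only [inv_sq_eq_rpow, integral_Ioi_rpow_of_lt (by norm_num : (-2 : ℝ) < -1) hc]
  norm_num [Real.rpow_neg_one]

theorem integral_inv_sq_snd_shearedOmega {c : ℝ} (hc : 0 < c) :
    ∫ q : ℝ × ℝ in Ioo (-1) 0 ×ˢ Ioi c ∪ Ioo 0 1 ×ˢ Iio (-c), (q.2 ^ 2)⁻¹ = 2 * c⁻¹ := by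
  have hEven : ∀ x : ℝ, ((-x) ^ 2)⁻¹ = (x ^ 2)⁻¹ := fun x => by rw [neg_sq]
  have hIoi := integrableOn_Ioi_inv_sq hc
  have hIio := (integrableOn_Iio_neg_iff_of_even hEven c).2 hIoi
  have hdisj : Disjoint (Ioo (-1 : ℝ) 0 ×ˢ Ioi c) (Ioo 0 1 ×ˢ Iio (-c)) :=
    disjoint_prod.2 (Or.inl (disjoint_left.2 fun _ hneg hpos => lt_asymm hneg.2 hpos.1))
  rw [Measure.volume_eq_prod, setIntegral_union hdisj (measurableSet_Ioo.prod measurableSet_Iio)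
    (hIoi.comp_snd_prod (by simp)) (hIio.comp_snd_prod (by simp)),
    setIntegral_prod_fun_snd _ _ fun y : ℝ => (y ^ 2)⁻¹,
    setIntegral_prod_fun_snd _ _ fun y : ℝ => (y ^ 2)⁻¹,
    integral_Iio_neg_of_even hEven, integral_Ioi_inv_sq hc]
  simp [Real.volume_real_Ioo, two_mul]

theorem omegaRegion_eq_preimage_shear {k : ℝ} (hk0 : 0 < k) (hk2 : k ≤ 2) :
    omegaRegion k = (fun p : ℝ × ℝ => (p.1, p.2 - p.1)) ⁻¹'
      (Ioo (-1) 0 ×ˢ Ioi (2 / k) ∪ Ioo 0 1 ×ˢ Iio (-(2 / k))) := by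
  have hc : 1 ≤ 2 / k := (one_le_div hk0).2 hk2
  ext ⟨x, y⟩
  simp only [omegaRegion, regionJ, mem_ofPred_eq, mem_union, mem_prod, mem_preimage,
    mem_Ioo, mem_Ioi, mem_Iio, lt_abs]
  constructor
  · rintro ⟨⟨hx, hy⟩ | ⟨hx, hy⟩, hxy | hxy⟩
    · linarith
    · exact Or.inl ⟨hx, by linarith⟩
    · exact Or.inr ⟨hx, by linarith⟩
    · linarith
  · rintro (⟨⟨hx1, hx2⟩, hxy⟩ | ⟨⟨hx1, hx2⟩, hxy⟩)
    · exact ⟨Or.inl ⟨⟨hx1, hx2⟩, by linarith⟩, Or.inr (by linarith)⟩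
    · exact ⟨Or.inr ⟨⟨hx1, hx2⟩, by linarith⟩, Or.inl (by linarith)⟩

/-- For `0 < k ≤ 2`, `∬_{Ω_k} (x − y)^{−2} dy dx = k`. -/
theorem integral_omegaRegion (k : ℝ) (hk0 : 0 < k) (hk2 : k ≤ 2) :
    ∫ p in omegaRegion k, ((p.1 - p.2) ^ 2)⁻¹ = k := by
  have hshear : MeasurePreserving (fun p : ℝ × ℝ => (p.1, p.2 - p.1)) volume volume :=
    measurePreserving_prod_sub volume volume
  calc ∫ p in omegaRegion k, ((p.1 - p.2) ^ 2)⁻¹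
      = ∫ p in (fun p : ℝ × ℝ => (p.1, p.2 - p.1)) ⁻¹'
            (Ioo (-1) 0 ×ˢ Ioi (2 / k) ∪ Ioo 0 1 ×ˢ Iio (-(2 / k))),
          (((p.1, p.2 - p.1) : ℝ × ℝ).2 ^ 2)⁻¹ := by
        rw [omegaRegion_eq_preimage_shear hk0 hk2]
        congr! 3 with p
        ring
    _ = ∫ q : ℝ × ℝ in Ioo (-1) 0 ×ˢ Ioi (2 / k) ∪ Ioo 0 1 ×ˢ Iio (-(2 / k)), (q.2 ^ 2)⁻¹ :=
        hshear.setIntegral_preimage_emb (MeasurableEquiv.shearSubRight ℝ).measurableEmbedding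
          (fun q : ℝ × ℝ => (q.2 ^ 2)⁻¹) _
    _ = k := by
        rw [integral_inv_sq_snd_shearedOmega (div_pos two_pos hk0)]
        field_simp
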